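/- Let Ω⁰ be a polyhedral cone domain in ℝ^{n+1}. For each i let δ_i ∈ (0,1) with δ_i → 0, let Ψ_i : ℝ^{n+1} → ℝ^{n+1} be linear with ‖Ψ_i − Id‖ ≤ δ_i, and let Φ_i : B_2 → ℝ^{n+1} be a C² diffeomorphism onto its image with Φ_i(0) = 0, DΦ_i|_0 = Id, and sup_{y ∈ B_2}(|Φ_i(y) − y| + ‖DΦ_i|_y − Id‖ + ‖D²Φ_i|_y‖) ≤ δ_i. Let z_i ∈ Ω⁰ with Ψ_i(z_i) ∈ B_2, and suppose x_i := Φ_i(Ψ_i(z_i)) converges to some x ∈ B_1. Then x ∈ Ω⁰, and setting T_{x_i}Ω_i := (DΦ_i|_{Ψ_i(z_i)} ∘ Ψ_i)(T_{z_i}Ω⁰), one has liminf_{i→∞} Θ_{T_{x_i}Ω_i} ≥ Θ_{T_xΩ⁰}. -/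
import Mathlib


open scoped RealInnerProductSpace Pointwise
open MeasureTheory Filter Metric

/-- The density `Θ_C = ω_{n+1}^{-1} · ℒ^{n+1}(C ∩ B_1(0))` of a cone `C ⊆ ℝ^{n+1}`. -/
noncomputable def coneDensity (n : ℕ) (C : Set (EuclideanSpace ℝ (Fin (n + 1)))) : ℝ :=
  (volume (C ∩ Metric.ball 0 1)).toReal /
    (volume (Metric.ball (0 : EuclideanSpace ℝ (Fin (n + 1))) 1)).toReal

/-- The tangent domain `T_zΩ⁰` of the polyhedral cone domain `⋂ j, {x | ⟪x, ν j⟫ ≤ 0}`. -/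
def tangentDomain (n N : ℕ) (ν : Fin N → EuclideanSpace ℝ (Fin (n + 1)))
    (z : EuclideanSpace ℝ (Fin (n + 1))) : Set (EuclideanSpace ℝ (Fin (n + 1))) :=
  {y | ∀ j, ⟪z, ν j⟫ = 0 → ⟪y, ν j⟫ ≤ 0}

set_option maxHeartbeats 1000000 in
/-- Lower semicontinuity of the density of tangent domains for a sequence
of perturbed polyhedral domains `Ω_i = Φ_i(Ψ_i(Ω⁰))` with `Φ_i, Ψ_i → Id`. -/
theorem stmt_7 (n N : ℕ) (ν : Fin N → EuclideanSpace ℝ (Fin (n + 1)))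
    (hν : ∀ j, ‖ν j‖ = 1)
    (Ω0 : Set (EuclideanSpace ℝ (Fin (n + 1))))
    (hΩ0 : Ω0 = ⋂ j, {x : EuclideanSpace ℝ (Fin (n + 1)) | ⟪x, ν j⟫ ≤ 0})
    (hint : (interior Ω0).Nonempty)
    (δ : ℕ → ℝ) (hδ : ∀ i, 0 < δ i ∧ δ i < 1) (hδ0 : Tendsto δ atTop (nhds 0))
    (Ψ : ℕ → EuclideanSpace ℝ (Fin (n + 1)) →L[ℝ] EuclideanSpace ℝ (Fin (n + 1)))
    (hΨ : ∀ i, ‖Ψ i - ContinuousLinearMap.id ℝ (EuclideanSpace ℝ (Fin (n + 1)))‖ ≤ δ i)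
    (Φ : ℕ → EuclideanSpace ℝ (Fin (n + 1)) → EuclideanSpace ℝ (Fin (n + 1)))
    (hΦreg : ∀ i, ContDiffOn ℝ 2 (Φ i) (ball 0 2))
    (hΦinj : ∀ i, Set.InjOn (Φ i) (ball 0 2))
    (hΦ0 : ∀ i, Φ i 0 = 0)
    (hdΦ0 : ∀ i, fderiv ℝ (Φ i) 0 = ContinuousLinearMap.id ℝ (EuclideanSpace ℝ (Fin (n + 1))))
    (hΦbd : ∀ i, ∀ y ∈ ball (0 : EuclideanSpace ℝ (Fin (n + 1))) 2,
      ‖Φ i y - y‖ + ‖fderiv ℝ (Φ i) y - ContinuousLinearMap.id ℝ (EuclideanSpace ℝ (Fin (n + 1)))‖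
        + ‖fderiv ℝ (fderiv ℝ (Φ i)) y‖ ≤ δ i)
    (z : ℕ → EuclideanSpace ℝ (Fin (n + 1))) (hz : ∀ i, z i ∈ Ω0)
    (hzball : ∀ i, Ψ i (z i) ∈ ball (0 : EuclideanSpace ℝ (Fin (n + 1))) 2)
    (x : EuclideanSpace ℝ (Fin (n + 1)))
    (hx : Tendsto (fun i => Φ i (Ψ i (z i))) atTop (nhds x))
    (hxB : x ∈ ball (0 : EuclideanSpace ℝ (Fin (n + 1))) 1) :
    x ∈ Ω0 ∧
    coneDensity n (tangentDomain n N ν x) ≤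
      liminf (fun i =>
        coneDensity n
          (⇑((fderiv ℝ (Φ i) (Ψ i (z i))).comp (Ψ i)) '' tangentDomain n N ν (z i))) atTop := by
  have hδpos : ∀ i, 0 < δ i := fun i => (hδ i).1
  set Id1 : EuclideanSpace ℝ (Fin (n + 1)) →L[ℝ] EuclideanSpace ℝ (Fin (n + 1)) :=
    ContinuousLinearMap.id ℝ (EuclideanSpace ℝ (Fin (n + 1))) with hId1
  -- basic perturbation estimates
  have hΨz : ∀ i, ‖z i - Ψ i (z i)‖ ≤ δ i * ‖z i‖ := by
    intro i
    have h1 := (Ψ i - Id1).le_opNorm (z i)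
    have h2 : (Ψ i - Id1) (z i) = Ψ i (z i) - z i := by simp [hId1]
    rw [h2] at h1
    rw [norm_sub_rev]
    exact h1.trans (mul_le_mul_of_nonneg_right (hΨ i) (norm_nonneg _))
  have hΦz : ∀ i, ‖Φ i (Ψ i (z i)) - Ψ i (z i)‖ ≤ δ i := by
    intro i
    have h0 := hΦbd i (Ψ i (z i)) (hzball i)
    have h1 := norm_nonneg (fderiv ℝ (Φ i) (Ψ i (z i)) - Id1)
    have h2 := norm_nonneg (fderiv ℝ (fderiv ℝ (Φ i)) (Ψ i (z i)))
    rw [hId1] at h1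
    linarith
  have hDΦ : ∀ i, ‖fderiv ℝ (Φ i) (Ψ i (z i)) - Id1‖ ≤ δ i := by
    intro i
    have h0 := hΦbd i (Ψ i (z i)) (hzball i)
    have h1 := norm_nonneg (Φ i (Ψ i (z i)) - Ψ i (z i))
    have h2 := norm_nonneg (fderiv ℝ (fderiv ℝ (Φ i)) (Ψ i (z i)))
    rw [hId1]
    linarith
  -- convergence z i → x
  have hzx : Tendsto z atTop (nhds x) := by
    rw [tendsto_iff_norm_sub_tendsto_zero]
    have hx' : Tendsto (fun i => ‖Φ i (Ψ i (z i)) - x‖) atTop (nhds 0) :=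
      tendsto_iff_norm_sub_tendsto_zero.mp hx
    apply squeeze_zero' (Eventually.of_forall fun i => norm_nonneg _)
      (g := fun i => 5 * δ i + ‖Φ i (Ψ i (z i)) - x‖)
    · filter_upwards [hδ0.eventually_lt_const (by norm_num : (0:ℝ) < 1/2)] with i hi
      have hz4 : ‖z i‖ ≤ 4 := by
        have h1 := hΨz i
        have h2 : ‖Ψ i (z i)‖ ≤ 2 := (mem_ball_zero_iff.1 (hzball i)).le
        have h3 : ‖z i‖ ≤ ‖z i - Ψ i (z i)‖ + ‖Ψ i (z i)‖ := by
          calc ‖z i‖ = ‖(z i - Ψ i (z i)) + Ψ i (z i)‖ := by rw [sub_add_cancel]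
            _ ≤ _ := norm_add_le _ _
        have h4 : δ i * ‖z i‖ ≤ (1/2) * ‖z i‖ :=
          mul_le_mul_of_nonneg_right hi.le (norm_nonneg _)
        linarith
      have htri : ‖z i - x‖ ≤ ‖z i - Ψ i (z i)‖ + ‖Ψ i (z i) - Φ i (Ψ i (z i))‖
          + ‖Φ i (Ψ i (z i)) - x‖ := by
        calc ‖z i - x‖ = ‖(z i - Ψ i (z i)) + (Ψ i (z i) - Φ i (Ψ i (z i)))
            + (Φ i (Ψ i (z i)) - x)‖ := by abel_nf
          _ ≤ _ := norm_add₃_le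
      have h5 : δ i * ‖z i‖ ≤ 4 * δ i := by nlinarith [hδpos i]
      have h6 : ‖Ψ i (z i) - Φ i (Ψ i (z i))‖ ≤ δ i := by rw [norm_sub_rev]; exact hΦz i
      have h7 := hΨz i
      linarith
    · have h8 : Tendsto (fun i => 5 * δ i + ‖Φ i (Ψ i (z i)) - x‖) atTop (nhds (5 * 0 + 0)) :=
        (hδ0.const_mul 5).add hx'
      simpa using h8
  -- x ∈ Ω0
  have hmemj : ∀ j, ⟪x, ν j⟫ ≤ 0 := by
    intro j
    have hcont : Tendsto (fun i => ⟪z i, ν j⟫) atTop (nhds ⟪x, ν j⟫) :=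
      hzx.inner tendsto_const_nhds
    refine le_of_tendsto hcont (Eventually.of_forall fun i => ?_)
    have h0 := hz i
    rw [hΩ0] at h0
    exact Set.mem_iInter.1 h0 j
  have hxΩ : x ∈ Ω0 := by
    rw [hΩ0]; exact Set.mem_iInter.2 fun j => hmemj j
  refine ⟨hxΩ, ?_⟩
  -- eventual inclusion of tangent domains
  have hsub : ∀ᶠ i in atTop, tangentDomain n N ν x ⊆ tangentDomain n N ν (z i) := by
    have hev : ∀ᶠ i in atTop, ∀ j, ⟪z i, ν j⟫ = 0 → ⟪x, ν j⟫ = 0 := by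
      rw [eventually_all]
      intro j
      rcases (hmemj j).eq_or_lt with h0 | hneg
      · exact Eventually.of_forall fun i _ => h0
      · have hcont : Tendsto (fun i => ⟪z i, ν j⟫) atTop (nhds ⟪x, ν j⟫) :=
          hzx.inner tendsto_const_nhds
        filter_upwards [hcont.eventually_lt_const hneg] with i hi h0
        exact absurd h0 (ne_of_lt hi)
    filter_upwards [hev] with i hi y hy j hj
    exact hy j (hi j hj)
  -- the linear maps A i and their distance to the identity
  set A : ℕ → EuclideanSpace ℝ (Fin (n + 1)) →L[ℝ] EuclideanSpace ℝ (Fin (n + 1)) :=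
    fun i => (fderiv ℝ (Φ i) (Ψ i (z i))).comp (Ψ i) with hA
  set e : ℕ → ℝ := fun i => ‖A i - Id1‖ with he
  have he_nonneg : ∀ i, 0 ≤ e i := fun i => norm_nonneg _
  have he_bd : ∀ i, e i ≤ 3 * δ i := by
    intro i
    have hdecomp : A i - Id1 =
        (fderiv ℝ (Φ i) (Ψ i (z i)) - Id1).comp (Ψ i) + (Ψ i - Id1) := by
      ext v
      simp [hA, hId1, ContinuousLinearMap.sub_apply, ContinuousLinearMap.comp_apply]
    have hΨnorm : ‖Ψ i‖ ≤ 1 + δ i := by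
      have h1 : ‖Ψ i‖ ≤ ‖Ψ i - Id1‖ + ‖Id1‖ := by
        calc ‖Ψ i‖ = ‖(Ψ i - Id1) + Id1‖ := by rw [sub_add_cancel]
          _ ≤ _ := norm_add_le _ _
      have hid : ‖Id1‖ ≤ 1 := ContinuousLinearMap.norm_id_le
      have h2 := hΨ i
      linarith
    have hΨ' : ‖Ψ i - Id1‖ ≤ δ i := by rw [hId1]; exact hΨ i
    have step1 : e i ≤ ‖(fderiv ℝ (Φ i) (Ψ i (z i)) - Id1).comp (Ψ i)‖ + ‖Ψ i - Id1‖ := by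
      rw [show e i = ‖A i - Id1‖ from rfl, hdecomp]
      exact norm_add_le _ _
    have step2 : ‖(fderiv ℝ (Φ i) (Ψ i (z i)) - Id1).comp (Ψ i)‖
        ≤ ‖fderiv ℝ (Φ i) (Ψ i (z i)) - Id1‖ * ‖Ψ i‖ :=
      ContinuousLinearMap.opNorm_comp_le _ _
    have step3 : ‖fderiv ℝ (Φ i) (Ψ i (z i)) - Id1‖ * ‖Ψ i‖ ≤ δ i * (1 + δ i) :=
      mul_le_mul (hDΦ i) hΨnorm (norm_nonneg _) (hδpos i).le
    have := (hδ i).2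
    nlinarith [hδpos i]
  have he0 : Tendsto e atTop (nhds 0) := by
    apply squeeze_zero he_nonneg he_bd
    simpa using hδ0.const_mul 3
  have hAnorm : ∀ i (y : EuclideanSpace ℝ (Fin (n + 1))), ‖A i y‖ ≤ (1 + e i) * ‖y‖ := by
    intro i y
    have h1 : ‖A i y - y‖ ≤ e i * ‖y‖ := by
      have h2 := (A i - Id1).le_opNorm y
      simpa [hId1] using h2
    calc ‖A i y‖ = ‖(A i y - y) + y‖ := by rw [sub_add_cancel]
      _ ≤ ‖A i y - y‖ + ‖y‖ := norm_add_le _ _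
      _ ≤ e i * ‖y‖ + 1 * ‖y‖ := by nlinarith [norm_nonneg y]
      _ = (1 + e i) * ‖y‖ := by ring
  -- the radii r i
  set r : ℕ → ℝ := fun i => (1 + e i)⁻¹ with hr
  have h1e_pos : ∀ i, 0 < 1 + e i := fun i => by linarith [he_nonneg i]
  have hr_pos : ∀ i, 0 < r i := fun i => inv_pos.2 (h1e_pos i)
  have hr1 : Tendsto r atTop (nhds 1) := by
    have h : Tendsto (fun i => 1 + e i) atTop (nhds (1 + 0)) := tendsto_const_nhds.add he0
    have h2 := h.inv₀ (by norm_num)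
    simpa using h2
  -- cone property of the tangent domain
  have hcone : ∀ (w : EuclideanSpace ℝ (Fin (n + 1))), w ∈ tangentDomain n N ν x →
      ∀ c : ℝ, 0 ≤ c → c • w ∈ tangentDomain n N ν x := by
    intro w hw c hc j hj
    rw [real_inner_smul_left]
    exact mul_nonpos_of_nonneg_of_nonpos hc (hw j hj)
  -- determinants
  set d : ℕ → ℝ := fun i =>
    |LinearMap.det ((A i : EuclideanSpace ℝ (Fin (n + 1)) →ₗ[ℝ] EuclideanSpace ℝ (Fin (n + 1))))|
    with hd
  have hd_nonneg : ∀ i, 0 ≤ d i := fun i => abs_nonneg _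
  have hd1 : Tendsto d atTop (nhds 1) := by
    have hAid : Tendsto A atTop (nhds Id1) := by
      rw [tendsto_iff_norm_sub_tendsto_zero]
      exact he0
    have hdet : Tendsto (fun i =>
        LinearMap.det ((A i : EuclideanSpace ℝ (Fin (n + 1)) →ₗ[ℝ] EuclideanSpace ℝ (Fin (n + 1)))))
        atTop (nhds (LinearMap.det
          ((Id1 : EuclideanSpace ℝ (Fin (n + 1)) →ₗ[ℝ] EuclideanSpace ℝ (Fin (n + 1)))))) :=
      (ContinuousLinearMap.continuous_det.tendsto _).comp hAid
    have hdetid : LinearMap.det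
        ((Id1 : EuclideanSpace ℝ (Fin (n + 1)) →ₗ[ℝ] EuclideanSpace ℝ (Fin (n + 1)))) = 1 := by
      simp [hId1]
    rw [hdetid] at hdet
    have h3 := hdet.abs
    simpa using h3
  -- notations for measures
  set ω : ℝ := (volume (Metric.ball (0 : EuclideanSpace ℝ (Fin (n + 1))) 1)).toReal with hω
  have hωpos : 0 < ω := by
    have h1 : volume (Metric.ball (0 : EuclideanSpace ℝ (Fin (n + 1))) 1) ≠ ⊤ :=
      measure_ball_lt_top.ne
    have h2 : 0 < volume (Metric.ball (0 : EuclideanSpace ℝ (Fin (n + 1))) 1) :=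
      measure_ball_pos _ _ one_pos
    exact ENNReal.toReal_pos h2.ne' h1
  set V : ENNReal := volume (tangentDomain n N ν x ∩ Metric.ball 0 1) with hV
  have hΘ : coneDensity n (tangentDomain n N ν x) = V.toReal / ω := rfl
  -- the lower-bound sequence b
  set b : ℕ → ℝ := fun i => d i * (r i ^ (n + 1)) * (V.toReal / ω) with hb
  have hbΘ : Tendsto b atTop (nhds (coneDensity n (tangentDomain n N ν x))) := by
    rw [hΘ]
    have h4 : Tendsto (fun i => d i * (r i ^ (n + 1)) * (V.toReal / ω)) atTop
        (nhds (1 * 1 ^ (n + 1) * (V.toReal / ω))) :=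
      ((hd1.mul (hr1.pow (n + 1)))).mul_const _
    simpa using h4
  -- the key eventual inequality
  have hkey : ∀ᶠ i in atTop, b i ≤
      coneDensity n (⇑(A i) '' tangentDomain n N ν (z i)) := by
    filter_upwards [hsub] with i hsubi
    have hincl : ⇑(A i) '' (r i • (tangentDomain n N ν x ∩ Metric.ball 0 1)) ⊆
        (⇑(A i) '' tangentDomain n N ν (z i)) ∩ Metric.ball 0 1 := by
      rintro - ⟨-, ⟨w, hw, rfl⟩, rfl⟩
      refine ⟨⟨r i • w, hsubi (hcone w hw.1 (r i) (hr_pos i).le), rfl⟩, ?_⟩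
      rw [mem_ball_zero_iff]
      have hw1 : ‖w‖ < 1 := mem_ball_zero_iff.1 hw.2
      have hlt : r i * ‖w‖ < r i := by
        nlinarith [hr_pos i, norm_nonneg w]
      calc ‖A i (r i • w)‖ ≤ (1 + e i) * ‖r i • w‖ := hAnorm i _
        _ = (1 + e i) * (r i * ‖w‖) := by
            rw [norm_smul, Real.norm_of_nonneg (hr_pos i).le]
        _ < (1 + e i) * r i := mul_lt_mul_of_pos_left hlt (h1e_pos i)
        _ = 1 := mul_inv_cancel₀ (h1e_pos i).ne'
    have hm1 : volume (⇑(A i) '' (r i • (tangentDomain n N ν x ∩ Metric.ball 0 1)))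
        = ENNReal.ofReal (d i) * (ENNReal.ofReal (r i ^ (n + 1)) * V) := by
      have e1 := Measure.addHaar_image_continuousLinearMap (volume) (A i)
        (r i • (tangentDomain n N ν x ∩ Metric.ball 0 1))
      have e2 := Measure.addHaar_smul_of_nonneg
        (volume : Measure (EuclideanSpace ℝ (Fin (n + 1)))) (hr_pos i).le
        (tangentDomain n N ν x ∩ Metric.ball 0 1)
      rw [finrank_euclideanSpace_fin] at e2
      rw [e1, e2, hV]
    have hfin : volume ((⇑(A i) '' tangentDomain n N ν (z i)) ∩ Metric.ball 0 1) ≠ ⊤ :=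
      (lt_of_le_of_lt (measure_mono Set.inter_subset_right) measure_ball_lt_top).ne
    have h2 : ENNReal.ofReal (d i) * (ENNReal.ofReal (r i ^ (n + 1)) * V)
        ≤ volume ((⇑(A i) '' tangentDomain n N ν (z i)) ∩ Metric.ball 0 1) := by
      rw [← hm1]; exact measure_mono hincl
    have h3 : d i * (r i ^ (n + 1) * V.toReal)
        ≤ (volume ((⇑(A i) '' tangentDomain n N ν (z i)) ∩ Metric.ball 0 1)).toReal := by
      have h4 := ENNReal.toReal_mono hfin h2
      rwa [ENNReal.toReal_mul, ENNReal.toReal_mul, ENNReal.toReal_ofReal (hd_nonneg i),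
        ENNReal.toReal_ofReal (by positivity)] at h4
    show d i * (r i ^ (n + 1)) * (V.toReal / ω)
        ≤ (volume ((⇑(A i) '' tangentDomain n N ν (z i)) ∩ Metric.ball 0 1)).toReal / ω
    calc d i * (r i ^ (n + 1)) * (V.toReal / ω)
        = d i * (r i ^ (n + 1) * V.toReal) / ω := by ring
      _ ≤ _ := by
          rw [div_le_div_iff_of_pos_right hωpos]
          exact h3
  -- conclude via liminf
  have hbl : IsBoundedUnder (· ≥ ·) atTop b :=
    isBoundedUnder_of ⟨0, fun i => by positivity⟩
  have hcob : IsCoboundedUnder (· ≥ ·) atTop (fun i =>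
      coneDensity n (⇑(A i) '' tangentDomain n N ν (z i))) := by
    refine isCoboundedUnder_ge_of_le atTop (x := 1) fun i => ?_
    have h1 : (volume ((⇑(A i) '' tangentDomain n N ν (z i)) ∩ Metric.ball 0 1)).toReal ≤ ω :=
      ENNReal.toReal_mono measure_ball_lt_top.ne (measure_mono Set.inter_subset_right)
    exact div_le_one_of_le₀ h1 hωpos.le
  have hfinal := liminf_le_liminf hkey hbl hcob
  rwa [hbΘ.liminf_eq] at hfinal
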